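/- arXiv:math/0608590 — 5 statements merged into one kernel-verified Lean document; each statement's English description precedes it below -/
import Mathlib

section
/- With notation as in the previous lemma, for a partition η of a positive integer i: ∑_{η₁ ⊔ η₂ = η} (-1)^{ℓ(η₂)} (|η₁| + ℓ(η₁)) / (Aut(η₁) · Aut(η₂)) equals i+1 if η is the single-part partition (i), and equals 0 otherwise. Here |η₁| is the sum of the parts of η₁. -/
/-!
The weight `(-1)^(m-k) / (k! (m-k)!)` factors over the part-sizes and `|η₁| + ℓ(η₁) = ∑ (nⱼ + 1) kⱼ`
is linear in the `kⱼ`, so the sum splits as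
`∑ⱼ (nⱼ + 1) (∑ₖ k w_{mⱼ}(k)) ∏_{l ≠ j} (∑ₖ w_{mₗ}(k))` with `w_M(k) = (-1)^(M-k) / (k! (M-k)!)`.
By the binomial theorem `∑ₖ w_M(k) = (1 - 1)^M / M!` vanishes unless `M = 0`, and shifting `k`
shows that `∑ₖ k w_M(k)` vanishes unless `M = 1`. So only `η = (i)` contributes, with `n + 1 = i + 1`.
-/

open Finset
open scoped Nat

section Binomial

variable {K : Type*} [Field K] [CharZero K]

theorem sum_range_neg_one_pow_div_factorial_mul_factorial (M : ℕ) :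
    ∑ x ∈ range (M + 1), (-1 : K) ^ (M - x) / (x ! * (M - x)!) = if M = 0 then 1 else 0 := by
  have hterm : ∀ x ∈ range (M + 1), (-1 : K) ^ (M - x) / (x ! * (M - x)!) =
      1 ^ x * (-1) ^ (M - x) * M.choose x / M ! := by
    intro x hx
    have : (M ! : K) ≠ 0 := Nat.cast_ne_zero.mpr M.factorial_ne_zero
    rw [Nat.cast_choose K (mem_range_succ_iff.mp hx), one_pow]
    field_simp
  rw [sum_congr rfl hterm, ← sum_div, ← add_pow, add_neg_cancel]
  rcases M with _ | M <;> simp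

theorem sum_range_mul_neg_one_pow_div_factorial_mul_factorial (M : ℕ) :
    ∑ x ∈ range (M + 1), (x : K) * ((-1) ^ (M - x) / (x ! * (M - x)!)) =
      if M = 1 then 1 else 0 := by
  rcases M with _ | N
  · simp
  have hshift : ∀ x ∈ range (N + 1),
      ((x + 1 : ℕ) : K) * ((-1) ^ (N + 1 - (x + 1)) / ((x + 1)! * (N + 1 - (x + 1))!)) =
        (-1) ^ (N - x) / (x ! * (N - x)!) := by
    intro x _
    rw [Nat.add_sub_add_right, Nat.factorial_succ]
    push_cast
    field_simp
  rw [sum_range_succ', sum_congr rfl hshift, sum_range_neg_one_pow_div_factorial_mul_factorial]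
  simp

end Binomial

theorem Fintype.sum_pi_prod_mul_sum {ι : Type*} [Fintype ι] [DecidableEq ι] {κ : ι → Type*}
    [∀ i, Fintype (κ i)] {R : Type*} [CommSemiring R] (f g : ∀ i, κ i → R) :
    ∑ k : ∀ i, κ i, (∏ i, f i (k i)) * ∑ j, g j (k j) =
      ∑ j, (∑ x, g j x * f j x) * ∏ i ∈ {j}ᶜ, ∑ x, f i x := by
  have hupdate : ∀ j, ∀ i ∈ ({j}ᶜ : Finset ι), ∀ (v : κ j → R) x,
      Function.update f j v i x = f i x := fun j i hi v x => by
    rw [Function.update_of_ne (by simpa using hi)]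
  simp_rw [mul_sum]
  rw [sum_comm]
  refine Finset.sum_congr rfl fun j _ => ?_
  calc ∑ k : ∀ i, κ i, (∏ i, f i (k i)) * g j (k j)
      = ∑ k : ∀ i, κ i, ∏ i, Function.update f j (fun x => g j x * f j x) i (k i) := by
        refine Finset.sum_congr rfl fun k _ => ?_
        rw [Fintype.prod_eq_mul_prod_compl j, Fintype.prod_eq_mul_prod_compl j,
          Function.update_self,
          Finset.prod_congr rfl fun i hi => hupdate j i hi _ (k i)]
        ring
    _ = ∏ i, ∑ x, Function.update f j (fun x => g j x * f j x) i x := (Fintype.prod_sum _).symm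
    _ = (∑ x, g j x * f j x) * ∏ i ∈ {j}ᶜ, ∑ x, f i x := by
        rw [Fintype.prod_eq_mul_prod_compl j, Function.update_self]
        congr 1
        exact Finset.prod_congr rfl fun i hi => Finset.sum_congr rfl fun x _ => hupdate j i hi _ x

theorem Fintype.sum_mul_ite_eq_one_mul_prod_compl_ite_eq_zero {ι : Type*} [Fintype ι]
    [DecidableEq ι] {R : Type*} [CommSemiring R] (m : ι → ℕ) (c : ι → R) :
    ∑ j, c j * (if m j = 1 then 1 else 0) * ∏ i ∈ {j}ᶜ, (if m i = 0 then 1 else 0) =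
      if ∑ j, m j = 1 then ∑ j, c j * m j else 0 := by
  have hsingle : ∀ j, (if m j = 1 then (1 : R) else 0) * ∏ i ∈ {j}ᶜ, (if m i = 0 then 1 else 0) =
      if ∑ j, m j = 1 then (m j : R) else 0 := by
    intro j
    have hsplit := Fintype.sum_eq_add_sum_compl j m
    simp only [Finset.prod_boole, ← Finset.sum_eq_zero_iff]
    generalize ∑ i ∈ {j}ᶜ, m i = t at hsplit ⊢
    split_ifs <;> first | omega | simp [show m j = 0 by omega] | simp_all
  simp_rw [mul_assoc, hsingle, mul_ite, mul_zero]
  rw [Finset.sum_ite_irrel, sum_const_zero]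

theorem partition_splitting_weighted_alternating_sum_general (i r : ℕ)
    (n : Fin r → ℕ)
    (m : Fin r → ℕ) (hsum : ∑ j, n j * m j = i) :
    ∑ k : (j : Fin r) → Fin (m j + 1),
      (-1 : ℚ) ^ (∑ j, (m j - (k j : ℕ))) *
        ((∑ j, n j * (k j : ℕ) : ℕ) + (∑ j, (k j : ℕ) : ℕ)) /
        ((∏ j, (Nat.factorial (k j : ℕ) : ℚ)) *
          (∏ j, (Nat.factorial (m j - (k j : ℕ)) : ℚ)))
      = if (∑ j, m j) = 1 then (i : ℚ) + 1 else 0 := by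
  set F : ℕ → ℕ → ℚ := fun M x => (-1) ^ (M - x) / (x ! * (M - x)!)
  have hsum_F : ∀ M, ∑ x : Fin (M + 1), F M x = if M = 0 then 1 else 0 := fun M => by
    rw [Fin.sum_univ_eq_sum_range (F M), sum_range_neg_one_pow_div_factorial_mul_factorial]
  have hsum_mul_F : ∀ (c : ℚ) M, ∑ x : Fin (M + 1), c * (x : ℕ) * F M x =
      c * if M = 1 then 1 else 0 := fun c M => by
    simp only [mul_assoc, ← mul_sum]
    rw [Fin.sum_univ_eq_sum_range (fun x => (x : ℚ) * F M x),
      sum_range_mul_neg_one_pow_div_factorial_mul_factorial]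
  trans ∑ k : (j : Fin r) → Fin (m j + 1),
    (∏ j, F (m j) (k j)) * ∑ j, ((n j : ℚ) + 1) * (k j : ℕ)
  · refine Finset.sum_congr rfl fun k _ => ?_
    simp only [F, prod_div_distrib, prod_mul_distrib, prod_pow_eq_pow_sum]
    push_cast
    simp only [add_mul, one_mul, sum_add_distrib]
    ring
  rw [Fintype.sum_pi_prod_mul_sum
    (fun j (x : Fin (m j + 1)) => F (m j) x) fun j x => ((n j : ℚ) + 1) * (x : ℕ)]
  simp only [hsum_F, hsum_mul_F]
  rw [Fintype.sum_mul_ite_eq_one_mul_prod_compl_ite_eq_zero]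
  split_ifs with hS
  · push_cast [← hsum, add_mul, one_mul, sum_add_distrib]
    norm_cast
    rw [hS]
  · rfl

/-- Lemma 2 of the paper: for a partition `η` of `i ≥ 1` with distinct positive
part-sizes `n j` of multiplicities `m j ≥ 1`, summing over all splittings
`η = η₁ ⊔ η₂` (`η₁` takes `k j` copies of the part `n j`),
`∑ (-1)^(ℓ(η₂)) (|η₁| + ℓ(η₁)) / (Aut(η₁) ⬝ Aut(η₂))` equals `i + 1` if `η` is
the single-part partition `(i)` (i.e. `ℓ(η) = 1`), and `0` otherwise. -/
theorem partition_splitting_weighted_alternating_sum (i r : ℕ) (hi : 1 ≤ i) (hr : 1 ≤ r)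
    (n : Fin r → ℕ) (hn : Function.Injective n) (hnpos : ∀ j, 0 < n j)
    (m : Fin r → ℕ) (hm : ∀ j, 1 ≤ m j) (hsum : ∑ j, n j * m j = i) :
    ∑ k : (j : Fin r) → Fin (m j + 1),
      (-1 : ℚ) ^ (∑ j, (m j - (k j : ℕ))) *
        ((∑ j, n j * (k j : ℕ) : ℕ) + (∑ j, (k j : ℕ) : ℕ)) /
        ((∏ j, (Nat.factorial (k j : ℕ) : ℚ)) *
          (∏ j, (Nat.factorial (m j - (k j : ℕ)) : ℚ)))
      = if (∑ j, m j) = 1 then (i : ℚ) + 1 else 0 :=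
  partition_splitting_weighted_alternating_sum_general i r n m hsum
end

section
/- Fix d ∈ ℚ, d ≠ 0, and a power series D₁ with zero constant term. If series D_i (i ≥ 0) satisfy D₀ = 1/d, D_i(0) = 0 for i ≥ 1, D_1 is given, and the recursion ∑_{k=0}^{i} (-1)^k (D_{i-k})' D_k = 0 holds for all i ≥ 2, then D_i = (d^{i-1}/i!) D₁^i for all i ≥ 1. -/
/-!
With `E i := d⁻¹ (d D₁)ⁱ / i!`, i.e. `∑ E i tⁱ = d⁻¹ exp (t d D₁)`, the sequence `E` satisfies the
recursion, because `(exp (t g))' · exp (-t g) = t g'` has no coefficient of `tⁱ` for `i ≥ 2`.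
Conversely the recursion determines `D i` (`i ≥ 2`) from `D 1, …, D (i-1)`: its `k = 0` term is
`(D i)' · D 0` with `D 0` a nonzero constant, its `k = i` term vanishes, and `D i (0) = 0` fixes
the constant of integration. Hence `D = E`.
-/

open PowerSeries

namespace PowerSeries

section altDerivConv

variable {R : Type*} [CommRing R]

/-- The coefficient of `tⁱ` in `(∑ₖ D k tᵏ)' · ∑ₖ D k (-t)ᵏ`. -/
noncomputable def altDerivConv (D : ℕ → R⟦X⟧) (i : ℕ) : R⟦X⟧ :=
  ∑ k ∈ Finset.range (i + 1), (-1 : R) ^ k • (d⁄dX R (D (i - k)) * D k)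

lemma altDerivConv_smul (c : R) (D : ℕ → R⟦X⟧) (i : ℕ) :
    altDerivConv (fun n => c • D n) i = (c * c) • altDerivConv D i := by
  simp only [altDerivConv, Finset.smul_sum, Derivation.map_smul, smul_mul_smul_comm, smul_smul]
  exact Finset.sum_congr rfl fun k _ => by ring_nf

lemma altDerivConv_add_two (D : ℕ → R⟦X⟧) (m : ℕ) :
    altDerivConv D (m + 2) =
      d⁄dX R (D (m + 2)) * D 0 + (-1 : R) ^ (m + 2) • (d⁄dX R (D 0) * D (m + 2)) +
      ∑ k ∈ Finset.range (m + 1), (-1 : R) ^ (k + 1) • (d⁄dX R (D (m + 1 - k)) * D (k + 1)) := by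
  rw [altDerivConv, Finset.sum_range_succ, Finset.sum_range_succ']
  simp only [Nat.sub_self, Nat.sub_zero, pow_zero, one_smul, Nat.reduceSubDiff]
  abel

end altDerivConv

variable {K : Type*} [Field K]

noncomputable def expTerm (f : K⟦X⟧) (n : ℕ) : K⟦X⟧ := (n.factorial : K)⁻¹ • f ^ n

@[simp] lemma expTerm_zero (f : K⟦X⟧) : expTerm f 0 = 1 := by simp [expTerm]

@[simp] lemma expTerm_one (f : K⟦X⟧) : expTerm f 1 = f := by simp [expTerm]

variable [CharZero K]

lemma derivative_expTerm_succ (f : K⟦X⟧) (n : ℕ) :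
    d⁄dX K (expTerm f (n + 1)) = expTerm f n * d⁄dX K f := by
  simp only [expTerm, Derivation.map_smul, derivative_pow, Nat.add_sub_cancel, smul_mul_assoc]
  rw [mul_assoc, ← nsmul_eq_mul, ← Nat.cast_smul_eq_nsmul K, smul_smul]
  congr 1
  push_cast [Nat.factorial_succ]
  field_simp

lemma expTerm_mul_expTerm (f : K⟦X⟧) {a b n : ℕ} (h : a + b = n) :
    expTerm f a * expTerm f b = (n.choose b : K) • expTerm f n := by
  subst h
  simp only [expTerm, smul_mul_smul_comm, ← pow_add, smul_smul]
  congr 1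
  have : ((a + b).factorial : K) ≠ 0 := Nat.cast_ne_zero.mpr (Nat.factorial_ne_zero _)
  rw [Nat.cast_choose K (Nat.le_add_left b a), Nat.add_sub_cancel]
  field_simp

lemma sum_alternating_expTerm_mul {n : ℕ} (hn : n ≠ 0) (f : K⟦X⟧) :
    ∑ k ∈ Finset.range (n + 1), (-1 : K) ^ k • (expTerm f (n - k) * expTerm f k) = 0 := by
  have hchoose : ∑ k ∈ Finset.range (n + 1), (-1 : K) ^ k * (n.choose k : K) = 0 := by
    exact_mod_cast congrArg (Int.cast : ℤ → K) (Int.alternating_sum_range_choose_of_ne hn)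
  calc _ = ∑ k ∈ Finset.range (n + 1), ((-1 : K) ^ k * (n.choose k : K)) • expTerm f n :=
        Finset.sum_congr rfl fun k hk => by
          rw [expTerm_mul_expTerm f (Nat.sub_add_cancel (Finset.mem_range_succ_iff.mp hk)),
            smul_smul]
    _ = 0 := by rw [← Finset.sum_smul, hchoose, zero_smul]

lemma altDerivConv_expTerm {i : ℕ} (hi : 2 ≤ i) (f : K⟦X⟧) :
    altDerivConv (expTerm f) i = 0 := by
  obtain ⟨n, rfl⟩ : ∃ n, i = n + 1 := ⟨i - 1, by omega⟩
  have hderiv : ∀ k ∈ Finset.range (n + 1),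
      (-1 : K) ^ k • (d⁄dX K (expTerm f (n + 1 - k)) * expTerm f k) =
        d⁄dX K f * (-1 : K) ^ k • (expTerm f (n - k) * expTerm f k) := by
    intro k hk
    rw [Nat.sub_add_comm (Finset.mem_range_succ_iff.mp hk), derivative_expTerm_succ,
      mul_smul_comm]
    ring_nf
  rw [altDerivConv, Finset.sum_range_succ, Nat.sub_self, expTerm_zero,
    Derivation.map_one_eq_zero, zero_mul, smul_zero, add_zero, Finset.sum_congr rfl hderiv,
    ← Finset.mul_sum,
    sum_alternating_expTerm_mul (by omega), mul_zero]

lemma eq_of_altDerivConv_eq_zero {D E : ℕ → K⟦X⟧} {c : K} (hc : c ≠ 0)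
    (hD0 : D 0 = C c) (hE0 : E 0 = C c) (h1 : D 1 = E 1)
    (hconst : ∀ i, 2 ≤ i → constantCoeff (D i) = constantCoeff (E i))
    (hDrec : ∀ i, 2 ≤ i → altDerivConv D i = 0)
    (hErec : ∀ i, 2 ≤ i → altDerivConv E i = 0) :
    D = E := by
  funext i
  induction i using Nat.strong_induction_on with
  | _ i ih =>
  match i, ih with
  | 0, _ => rw [hD0, hE0]
  | 1, _ => exact h1
  | m + 2, ih =>
    have hmid : ∀ k ∈ Finset.range (m + 1),
        (-1 : K) ^ (k + 1) • (d⁄dX K (D (m + 1 - k)) * D (k + 1)) =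
          (-1 : K) ^ (k + 1) • (d⁄dX K (E (m + 1 - k)) * E (k + 1)) := by
      intro k hk
      rw [ih (m + 1 - k) (by omega), ih (k + 1) (by have := Finset.mem_range.mp hk; omega)]
    have hderiv : d⁄dX K (D (m + 2)) * C c = d⁄dX K (E (m + 2)) * C c := by
      have hD := hDrec (m + 2) le_add_self
      have hE := hErec (m + 2) le_add_self
      rw [altDerivConv_add_two, hD0, derivative_C, zero_mul, smul_zero, add_zero] at hD
      rw [altDerivConv_add_two, hE0, derivative_C, zero_mul, smul_zero, add_zero,
        ← Finset.sum_congr rfl hmid] at hE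
      exact add_right_cancel (hD.trans hE.symm)
    have hC : C c ≠ 0 := (map_ne_zero_iff _ C_injective).mpr hc
    exact derivative.ext (mul_right_cancel₀ hC hderiv) (hconst (m + 2) le_add_self)

end PowerSeries

/-- Theorem 1: the localization recursion uniquely determines the `D_i`.  If
`D₀ = 1/d`, the `D_i` (`i ≥ 1`) have zero constant term, and
`∑_{k=0}^{i} (-1)^k (D_{i-k})' D_k = 0` for all `i ≥ 2`, then
`D_i = (d^(i-1)/i!) D₁^i` for all `i ≥ 1`. -/
theorem D_series_unique (d : ℚ) (hd : d ≠ 0)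
    (D : ℕ → PowerSeries ℚ)
    (hD0 : D 0 = PowerSeries.C (1 / d))
    (hconst : ∀ i, 1 ≤ i → PowerSeries.constantCoeff (D i) = 0)
    (hrec : ∀ i, 2 ≤ i →
      ∑ k ∈ Finset.range (i + 1),
        ((-1 : ℚ) ^ k) • ((D (i - k)).derivativeFun * D k) = 0)
    (i : ℕ) (hi : 1 ≤ i) :
    D i = (d ^ (i - 1) / (Nat.factorial i : ℚ)) • (D 1) ^ i := by
  set E : ℕ → ℚ⟦X⟧ := fun n => d⁻¹ • expTerm (d • D 1) n
  have hDE : D = E := by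
    refine eq_of_altDerivConv_eq_zero (one_div_ne_zero hd) hD0 ?_ ?_ (fun i hi => ?_) hrec
      (fun i hi => ?_)
    · simp [E, smul_eq_C_mul]
    · simp [E, hd]
    · simp [E, expTerm, hconst 1 le_rfl, hconst i (by omega)]
      omega
    · rw [altDerivConv_smul, altDerivConv_expTerm hi, smul_zero]
  obtain ⟨n, rfl⟩ : ∃ n, i = n + 1 := ⟨i - 1, by omega⟩
  rw [congrFun hDE (n + 1)]
  simp only [E, expTerm, smul_pow, smul_smul, Nat.add_sub_cancel, pow_succ]
  congr 1
  field_simp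
end

section
/- Fix d ∈ ℚ, d ≠ 0, and rational numbers Υ₀, Υ₁, Υ₂, … . Define formal power series V_i(u) = u^{2i} · exp(d·Υ₀·u²) · ∑_{η ⊢ i} u^{2ℓ(η)} d^{ℓ(η)−1} Υ^η / Aut(η) for i ≥ 1, and V₀(u) = (1/d)·exp(d·Υ₀·u²). Then for every i ≥ 1: ∑_{k=0}^{i} (−1)^{i−k} V_k'(u) · V_{i−k}(√−1 · u) = ((2i+2)/d) · Υ_i · u^{2i+1}, where V(√−1·u) denotes the series obtained by substituting iu for u (well-defined over ℚ since each V_j(iu) has real coefficients after simplification, each monomial degree being even or the whole expression being treated over ℚ[i] with the final identity holding in ℚ[[u]]). -/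
/-!
With `A = ∑ₙ d Υₙ u^(2n+2) tⁿ`, the partition sums are the `t`-coefficients of
`P = exp A = ∑ₖ Pₖ tᵏ`, so that `Vₖ = d⁻¹ E Pₖ` with `E = exp (d Υ₀ u²)`.
The substitution `u ↦ √-1 u` sends `E` to `E⁻¹` and `Pₖ` to `(-1)ᵏ Qₖ` with `Q = exp (-A) = P⁻¹`,
so the alternating sum collapses to `d⁻² [tⁱ] (2 d Υ₀ u P Q + (∂ᵤ P) Q)`; the first convolution
vanishes for `i ≥ 1`, and `∂ᵤ P = (∂ᵤ A) P` leaves `d⁻² [tⁱ] ∂ᵤ A = (2i+2)/d Υᵢ u^(2i+1)`.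

No composition of power series is needed: both `∂ₜ P = (∂ₜ A) P` (hence `P Q = 1`) and
`u ∂ᵤ P = (u ∂ᵤ A) P` follow from the counting identity
`∑_{η ⊢ m} (∑_{p ∈ η} f p) w(η) = ∑ⱼ f j aⱼ P_{m-j}` for `w(η) = ∏ a_p / Aut(η)`, proved by
removing one part `j` from `η`, which divides `Aut(η)` by the multiplicity of `j`.
-/

open PowerSeries Finset

open scoped Nat

theorem Derivation.map_multiset_prod_map_of_eq_smul {α R A : Type*} [CommRing R] [Algebra ℚ R]
    [CommSemiring A] [Algebra A R] (D : Derivation A R R) {a : α → R} {f : α → ℚ}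
    {s : Multiset α} (hD : ∀ p ∈ s, D (a p) = f p • a p) :
    D (s.map a).prod = (s.map f).sum • (s.map a).prod := by
  induction s using Multiset.induction_on with
  | empty => simp
  | cons j s ih =>
    rw [Multiset.map_cons, Multiset.prod_cons, D.leibniz,
      ih fun p hp => hD p (Multiset.mem_cons_of_mem hp), hD j (Multiset.mem_cons_self j s),
      Multiset.map_cons, Multiset.sum_cons, add_smul, smul_eq_mul, smul_eq_mul, mul_smul_comm,
      mul_smul_comm, mul_comm (s.map a).prod, add_comm]

namespace Multiset

variable {α : Type*} [DecidableEq α]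

/-- `Aut(s)` in the paper's notation. -/
def symFactor (s : Multiset α) : ℕ :=
  ∏ p ∈ s.toFinset, (s.count p)!

theorem symFactor_cons (j : α) (s : Multiset α) :
    (j ::ₘ s).symFactor = (s.count j + 1) * s.symFactor := by
  have hrest : ∀ p ∈ s.toFinset.erase j, (j ::ₘ s).count p = s.count p := fun p hp =>
    count_cons_of_ne (Finset.ne_of_mem_erase hp) s
  unfold symFactor
  by_cases hj : j ∈ s.toFinset
  · rw [toFinset_cons, Finset.insert_eq_of_mem hj, ← Finset.mul_prod_erase _ _ hj,
      ← Finset.mul_prod_erase _ _ hj, Finset.prod_congr rfl fun p hp => by rw [hrest p hp],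
      count_cons_self, Nat.factorial_succ, mul_assoc]
  · have hj0 : s.count j = 0 := count_eq_zero.2 (by simpa using hj)
    rw [toFinset_cons, Finset.prod_insert hj, count_cons_self, hj0,
      Finset.prod_congr rfl fun p hp => by rw [count_cons_of_ne (by rintro rfl; exact hj hp)]]
    simp

variable {R : Type*} [CommRing R] [Algebra ℚ R]

def expWeight (a : α → R) (s : Multiset α) : R :=
  (s.symFactor : ℚ)⁻¹ • (s.map a).prod

theorem count_add_one_smul_expWeight_cons (a : α → R) (j : α) (s : Multiset α) :
    ((s.count j + 1 : ℕ) : ℚ) • (j ::ₘ s).expWeight a = a j * s.expWeight a := by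
  rw [expWeight, expWeight, symFactor_cons, smul_smul, Nat.cast_mul, mul_inv,
    ← mul_assoc, mul_inv_cancel₀ (by positivity), one_mul, map_cons, prod_cons, mul_smul_comm]

theorem _root_.Derivation.map_expWeight_of_eq_smul {A : Type*} [CommSemiring A]
    [Algebra A R] (D : Derivation A R R) {a : α → R} {f : α → ℚ} {s : Multiset α}
    (hD : ∀ p ∈ s, D (a p) = f p • a p) :
    D (s.expWeight a) = (s.map f).sum • s.expWeight a := by
  rw [expWeight, map_rat_smul, D.map_multiset_prod_map_of_eq_smul hD, smul_comm]

end Multiset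

namespace PowerSeries

theorem coeff_mul_eq_sum_range {A : Type*} [CommSemiring A] (f g : A⟦X⟧) (n : ℕ) :
    coeff n (f * g) = ∑ k ∈ range (n + 1), coeff k f * coeff (n - k) g := by
  rw [coeff_mul, Nat.sum_antidiagonal_eq_sum_range_succ_mk]

section PartitionExp

variable {R : Type*} [CommRing R] [Algebra ℚ R] (a : ℕ → R)

/-- `exp (∑ₙ aₙ Xⁿ)`, expanded over partitions; partitions have no zero parts, so `a 0` plays
no role. -/
def partitionExp : R⟦X⟧ :=
  mk fun n => ∑ η : n.Partition, η.parts.expWeight a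

theorem coeff_partitionExp (n : ℕ) :
    coeff n (partitionExp a) = ∑ η : n.Partition, η.parts.expWeight a :=
  coeff_mk _ _

theorem constantCoeff_partitionExp : constantCoeff (partitionExp a) = 1 := by
  have hparts : (default : Nat.Partition 0).parts = 0 := rfl
  rw [← coeff_zero_eq_constantCoeff_apply, coeff_partitionExp, Fintype.sum_unique, hparts]
  simp [Multiset.expWeight, Multiset.symFactor]

theorem sum_count_smul_expWeight {m j : ℕ} (hj : 1 ≤ j) (hjm : j ≤ m) :
    ∑ η : m.Partition, (η.parts.count j : ℚ) • η.parts.expWeight a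
      = a j * coeff (m - j) (partitionExp a) := by
  have hsupp : ∀ η ∈ (univ : Finset m.Partition),
      (η.parts.count j : ℚ) • η.parts.expWeight a ≠ 0 → j ∈ η.parts :=
    fun η _ h => Multiset.count_ne_zero.1 fun h0 => h (by rw [h0, Nat.cast_zero, zero_smul])
  rw [← sum_filter_of_ne hsupp, sum_subtype (p := fun η : m.Partition => j ∈ η.parts) _
      fun η => by simp,
    ← (Nat.Partition.partitionWithPartEquiv hj hjm).symm.sum_comp, coeff_partitionExp, mul_sum]
  refine sum_congr rfl fun μ _ => ?_
  simp only [Nat.Partition.partitionWithPartEquiv_symm_apply_parts, Multiset.count_cons_self,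
    Multiset.count_add_one_smul_expWeight_cons]

theorem sum_sum_map_smul_expWeight (f : ℕ → ℚ) (m : ℕ) :
    ∑ η : m.Partition, (η.parts.map f).sum • η.parts.expWeight a
      = ∑ j ∈ Icc 1 m, f j • (a j * coeff (m - j) (partitionExp a)) := by
  have hparts (η : m.Partition) :
      (η.parts.map f).sum = ∑ j ∈ Icc 1 m, f j * η.parts.count j := by
    have hsub : η.parts.toFinset ⊆ Icc 1 m := fun p hp => by
      rw [Multiset.mem_toFinset] at hp
      exact mem_Icc.2 ⟨η.parts_pos hp, Nat.Partition.le_of_mem_parts hp⟩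
    rw [sum_multiset_map_count, sum_subset hsub fun p _ hp => by
      rw [Multiset.count_eq_zero.2 (by simpa using hp), zero_smul]]
    simp only [nsmul_eq_mul, mul_comm]
  calc ∑ η : m.Partition, (η.parts.map f).sum • η.parts.expWeight a
      = ∑ η : m.Partition, ∑ j ∈ Icc 1 m,
          f j • ((η.parts.count j : ℚ) • η.parts.expWeight a) := by
        simp only [hparts, sum_smul, smul_smul]
    _ = ∑ j ∈ Icc 1 m, f j • (a j * coeff (m - j) (partitionExp a)) := by
        rw [sum_comm]
        refine sum_congr rfl fun j hj => ?_
        rw [← smul_sum, sum_count_smul_expWeight a (mem_Icc.1 hj).1 (mem_Icc.1 hj).2]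

theorem mk_sum_sum_map_smul_expWeight (f : ℕ → ℚ) :
    (mk fun m => ∑ η : m.Partition, (η.parts.map f).sum • η.parts.expWeight a)
      = (mk fun j => if j = 0 then 0 else f j • a j) * partitionExp a := by
  ext m
  have hsub : Icc 1 m ⊆ range (m + 1) := fun j hj => by
    rw [mem_range]
    exact Nat.lt_succ_of_le (mem_Icc.1 hj).2
  rw [coeff_mk, sum_sum_map_smul_expWeight, coeff_mul_eq_sum_range,
    ← sum_subset hsub fun j hj hj' => by
      obtain rfl : j = 0 := by
        rw [mem_range] at hj
        rw [mem_Icc] at hj'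
        omega
      rw [coeff_mk, if_pos rfl, zero_mul]]
  refine sum_congr rfl fun j hj => ?_
  rw [coeff_mk, if_neg (by rw [mem_Icc] at hj; omega), smul_mul_assoc]

theorem mk_derivation_coeff_partitionExp {A : Type*} [CommSemiring A] [Algebra A R]
    (D : Derivation A R R) {f : ℕ → ℚ} (hD : ∀ n, D (a n) = f n • a n) :
    (mk fun m => D (coeff m (partitionExp a)))
      = (mk fun j => if j = 0 then 0 else f j • a j) * partitionExp a := by
  rw [← mk_sum_sum_map_smul_expWeight]
  congr 1
  funext m
  rw [coeff_partitionExp, map_sum]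
  exact sum_congr rfl fun η _ => D.map_expWeight_of_eq_smul fun p _ => hD p

theorem X_mul_derivative_partitionExp :
    X * d⁄dX R (partitionExp a) = (mk fun j => (j : ℚ) • a j) * partitionExp a := by
  have hB : (mk fun j => (j : ℚ) • a j) = mk fun j => if j = 0 then 0 else (j : ℚ) • a j := by
    congr 1
    funext j
    split_ifs with h <;> simp [h]
  rw [hB, ← mk_sum_sum_map_smul_expWeight]
  ext m
  rcases m with _ | m
  · simp
  have hsum (η : (m + 1).Partition) : (η.parts.map (Nat.cast : ℕ → ℚ)).sum = (m + 1 : ℕ) := by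
    rw [← Nat.cast_multiset_sum, η.parts_sum]
  rw [coeff_succ_X_mul, coeff_derivative, coeff_mk, coeff_partitionExp, sum_mul]
  refine sum_congr rfl fun η _ => ?_
  rw [hsum, Nat.cast_smul_eq_nsmul, nsmul_eq_mul, mul_comm]
  push_cast
  ring

theorem partitionExp_mul_partitionExp_neg : partitionExp a * partitionExp (-a) = 1 := by
  have := IsAddTorsionFree.of_module_rat R
  have hB : (mk fun j => (j : ℚ) • (-a) j) = -mk fun j => (j : ℚ) • a j := by
    ext j
    simp
  have hP := X_mul_derivative_partitionExp a
  have hQ := X_mul_derivative_partitionExp (-a)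
  refine derivative.ext (X_mul_cancel ?_) ?_
  · rw [(d⁄dX R).leibniz, derivative_one, smul_eq_mul, smul_eq_mul]
    linear_combination partitionExp a * hQ + partitionExp (-a) * hP
      + partitionExp a * partitionExp (-a) * hB
  · rw [map_mul, constantCoeff_partitionExp, constantCoeff_partitionExp, mul_one, map_one]

theorem map_partitionExp {S : Type*} [CommRing S] [Algebra ℚ S] (g : R →+* S) :
    map g (partitionExp a) = partitionExp (g ∘ a) := by
  ext n
  rw [coeff_map, coeff_partitionExp, coeff_partitionExp, map_sum]
  refine sum_congr rfl fun η _ => ?_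
  rw [Multiset.expWeight, Multiset.expWeight, map_rat_smul, map_multiset_prod, Multiset.map_map]

theorem partitionExp_pow_mul (c : R) :
    partitionExp (fun n => c ^ n * a n) = rescale c (partitionExp a) := by
  have hpow (s : Multiset ℕ) : (s.map (c ^ ·)).prod = c ^ s.sum := by
    induction s using Multiset.induction_on with
    | empty => simp
    | cons j s ih => rw [Multiset.map_cons, Multiset.prod_cons, ih, Multiset.sum_cons, pow_add]
  ext n
  rw [coeff_rescale, coeff_partitionExp, coeff_partitionExp, mul_sum]
  refine sum_congr rfl fun η _ => ?_
  rw [Multiset.expWeight, Multiset.expWeight, Multiset.prod_map_mul, hpow, η.parts_sum,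
    mul_smul_comm]

end PartitionExp

theorem rescale_C {A : Type*} [CommSemiring A] (r c : A) : rescale r (C c) = C c := by
  ext n
  rw [coeff_rescale, coeff_C]
  split_ifs with h <;> simp [h]

theorem derivative_rescale {A : Type*} [CommSemiring A] (r : A) (f : A⟦X⟧) :
    d⁄dX A (rescale r f) = C r * rescale r (d⁄dX A f) := by
  ext n
  rw [coeff_derivative, coeff_rescale, coeff_C_mul, coeff_rescale, coeff_derivative, pow_succ]
  ring

theorem rescale_expand {A : Type*} [CommRing A] (r : A) (p : ℕ) (hp : p ≠ 0) (f : A⟦X⟧) :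
    rescale r (expand p hp f) = expand p hp (rescale (r ^ p) f) := by
  ext n
  rw [coeff_rescale, coeff_expand, coeff_expand]
  split_ifs with h
  · obtain ⟨q, rfl⟩ := h
    rw [coeff_rescale, Nat.mul_div_cancel_left q (Nat.pos_of_ne_zero hp), pow_mul]
  · rw [mul_zero]

theorem prod_map_C_mul_X_pow {ι A : Type*} [CommSemiring A] (s : Multiset ι) (c : ι → A)
    (e : ι → ℕ) :
    (s.map fun p => C (c p) * X ^ e p).prod = C (s.map c).prod * X ^ (s.map e).sum := by
  induction s using Multiset.induction_on with
  | empty => simp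
  | cons j s ih =>
    simp only [Multiset.map_cons, Multiset.prod_cons, Multiset.sum_cons, ih, map_mul, pow_add]
    ring

theorem rat_smul_eq_C_mul {K : Type*} [Field K] [CharZero K] (q : ℚ) (f : K⟦X⟧) :
    q • f = C (q : K) * f := by
  rw [Algebra.smul_def, algebraMap_apply, eq_ratCast]

section ExpSq

variable {A : Type*} [CommRing A] [Algebra ℚ A]

noncomputable def expSq (b : A) : A⟦X⟧ :=
  expand 2 two_ne_zero (rescale b (exp A))

theorem expSq_eq_mk {K : Type*} [Field K] [CharZero K] (b : K) :
    expSq b = mk fun n => if n % 2 = 0 then b ^ (n / 2) / ((n / 2)! : K) else 0 := by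
  ext n
  rw [expSq, coeff_expand, coeff_mk, coeff_rescale, coeff_exp]
  simp [Nat.dvd_iff_mod_eq_zero, div_eq_mul_inv]

theorem derivative_expSq (b : A) : d⁄dX A (expSq b) = C (2 * b) * X * expSq b := by
  rw [expSq, expand_apply, derivative_subst (HasSubst.X_pow two_ne_zero), derivative_rescale,
    derivative_exp, ← expand_apply 2 two_ne_zero, ← expand_apply 2 two_ne_zero, map_mul,
    expand_C, derivative_pow, derivative_X, map_mul, map_ofNat]
  ring

theorem rescale_expSq (r b : A) : rescale r (expSq b) = expSq (r ^ 2 * b) := by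
  rw [expSq, expSq, rescale_expand, rescale_rescale, mul_comm]

theorem expSq_mul_expSq_neg (b : A) : expSq b * expSq (-b) = 1 := by
  rw [expSq, expSq, ← map_mul, exp_mul_exp_eq_exp_add, add_neg_cancel, rescale_zero_apply,
    constantCoeff_exp, map_one, map_one]

end ExpSq

theorem X_mul_derivative_C_mul_X_pow {A : Type*} [CommRing A] [Algebra ℚ A] (c : A) (N : ℕ) :
    X * d⁄dX A (C c * X ^ N) = (N : ℚ) • (C c * X ^ N) := by
  rw [(d⁄dX A).leibniz, derivative_C, smul_zero, add_zero, derivative_pow, derivative_X,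
    Nat.cast_smul_eq_nsmul, nsmul_eq_mul, smul_eq_mul]
  rcases N with _ | N
  · simp
  · rw [Nat.add_sub_cancel, pow_succ]
    ring

theorem mk_X_mul_derivative_coeff_partitionExp {A : Type*} [CommRing A] [Algebra ℚ A]
    (c : ℕ → A) (e : ℕ → ℕ) :
    (mk fun m => X * d⁄dX A (coeff m (partitionExp fun n => C (c n) * X ^ e n)))
      = (mk fun j => if j = 0 then 0 else (e j : ℚ) • (C (c j) * X ^ e j))
        * partitionExp fun n => C (c n) * X ^ e n := by
  have h := mk_derivation_coeff_partitionExp _ (X • d⁄dX A) (f := fun n => (e n : ℚ)) fun n => by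
    rw [Derivation.smul_apply, smul_eq_mul]
    exact X_mul_derivative_C_mul_X_pow (c n) (e n)
  simpa only [Derivation.smul_apply, smul_eq_mul] using h

theorem rescale_I_coeff_partitionExp (c : ℕ → ℂ) (k : ℕ) :
    rescale Complex.I (coeff k (partitionExp fun n => C (c n) * X ^ (2 * n + 2)))
      = (-1) ^ k * coeff k (partitionExp (-fun n => C (c n) * X ^ (2 * n + 2))) := by
  have ha : (rescale Complex.I ∘ fun n => C (c n) * X ^ (2 * n + 2))
      = fun n => (-1) ^ n * (-fun n => C (c n) * X ^ (2 * n + 2)) n := by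
    funext n
    have hI : Complex.I ^ (2 * n + 2) = (-1) ^ n * -1 := by
      rw [show 2 * n + 2 = 2 * (n + 1) by ring, pow_mul, Complex.I_sq, pow_succ]
    rw [Function.comp_apply, Pi.neg_apply, map_mul, rescale_C, map_pow, rescale_X, mul_pow,
      ← map_pow, hI, map_mul, map_pow, map_neg, map_one]
    ring
  rw [← coeff_map, map_partitionExp, ha, partitionExp_pow_mul, coeff_rescale]

theorem coeff_partitionExp_C_mul_X_pow (d : ℚ) (Υ : ℕ → ℚ) {k : ℕ} (hk : 1 ≤ k) :
    coeff k (partitionExp fun n => C ((d * Υ n : ℚ) : ℂ) * X ^ (2 * n + 2))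
      = C (d : ℂ) * (X ^ (2 * k) * ∑ η : k.Partition, X ^ (2 * Multiset.card η.parts) *
        C (((d ^ (Multiset.card η.parts - 1) * (η.parts.map Υ).prod /
          ∏ p ∈ η.parts.toFinset, (Nat.factorial (η.parts.count p) : ℚ) : ℚ) : ℂ))) := by
  rw [coeff_partitionExp, mul_sum, mul_sum]
  refine sum_congr rfl fun η _ => ?_
  set ℓ := Multiset.card η.parts
  have hℓ : ℓ ≠ 0 := fun h => by
    have := η.parts_sum
    rw [Multiset.card_eq_zero.1 h, Multiset.sum_zero] at this
    omega
  have hexp : (η.parts.map fun n => 2 * n + 2).sum = 2 * k + 2 * ℓ := by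
    rw [Multiset.sum_map_add, Multiset.sum_map_mul_left, Multiset.map_id', η.parts_sum,
      Multiset.map_const', Multiset.sum_replicate, smul_eq_mul, mul_comm ℓ]
  have hcoeff : (η.parts.map fun n => ((d * Υ n : ℚ) : ℂ)).prod
      = ((d ^ ℓ * (η.parts.map Υ).prod : ℚ) : ℂ) := by
    simp only [Rat.cast_mul, Rat.cast_pow, Rat.cast_multiset_prod, Multiset.map_map,
      Function.comp_def, Multiset.prod_map_mul, Multiset.map_const', Multiset.prod_replicate, ℓ]
  have hsym : (∏ p ∈ η.parts.toFinset, (Nat.factorial (η.parts.count p) : ℚ))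
      = η.parts.symFactor := by
    rw [Multiset.symFactor, Nat.cast_prod]
  have hq : ((η.parts.symFactor : ℚ))⁻¹ * (d ^ ℓ * (η.parts.map Υ).prod)
      = d * (d ^ (ℓ - 1) * (η.parts.map Υ).prod / η.parts.symFactor) := by
    rw [← Nat.sub_add_cancel (Nat.one_le_iff_ne_zero.2 hℓ), pow_succ', Nat.add_sub_cancel]
    ring
  rw [Multiset.expWeight, prod_map_C_mul_X_pow, hexp, hcoeff, hsym, rat_smul_eq_C_mul, pow_add,
    ← mul_assoc, ← map_mul, ← Rat.cast_mul, hq, Rat.cast_mul, map_mul]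
  ring

theorem X_mul_sum_neg_one_pow_smul_derivative_mul_rescale_I {c b : ℂ} {P Q : ℂ⟦X⟧⟦X⟧}
    {V : ℕ → ℂ⟦X⟧} (hV : ∀ k, V k = C c * (expSq b * coeff k P)) (hPQ : P * Q = 1)
    (hP : ∀ k, rescale Complex.I (coeff k P) = (-1) ^ k * coeff k Q) {i : ℕ} (hi : i ≠ 0) :
    X * ∑ k ∈ range (i + 1), (-1 : ℂ) ^ (i - k) • (d⁄dX ℂ (V k) * rescale Complex.I (V (i - k)))
      = C (c ^ 2) * coeff i ((mk fun m => X * d⁄dX ℂ (coeff m P)) * Q) := by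
  have hE := expSq_mul_expSq_neg b
  have hterm (k : ℕ) :
      X * ((-1 : ℂ) ^ (i - k) • (d⁄dX ℂ (V k) * rescale Complex.I (V (i - k))))
        = C (c ^ 2) * (C (2 * b) * X ^ 2 * (coeff k P * coeff (i - k) Q)
          + X * d⁄dX ℂ (coeff k P) * coeff (i - k) Q) := by
    have hsign : ((-1 : ℂ⟦X⟧) ^ (i - k)) ^ 2 = 1 := by
      rw [← pow_mul, mul_comm, pow_mul, neg_one_sq, one_pow]
    rw [hV, hV, map_mul (rescale Complex.I), map_mul (rescale Complex.I), rescale_C, rescale_expSq,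
      Complex.I_sq, neg_one_mul, hP, (d⁄dX ℂ).leibniz, (d⁄dX ℂ).leibniz, derivative_C,
      derivative_expSq, smul_eq_C_mul, map_pow, map_neg, map_one]
    simp only [smul_eq_mul, mul_zero, add_zero, map_pow]
    linear_combination (C c ^ 2 * X * (C (2 * b) * X * (coeff k P * coeff (i - k) Q)
      + d⁄dX ℂ (coeff k P) * coeff (i - k) Q)) * ((-1) ^ (i - k) * (-1) ^ (i - k) * hE + hsign)
  calc X * ∑ k ∈ range (i + 1),
          (-1 : ℂ) ^ (i - k) • (d⁄dX ℂ (V k) * rescale Complex.I (V (i - k)))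
      = C (c ^ 2) * ∑ k ∈ range (i + 1), (C (2 * b) * X ^ 2 * (coeff k P * coeff (i - k) Q)
          + X * d⁄dX ℂ (coeff k P) * coeff (i - k) Q) := by
        simp only [mul_sum, hterm]
    _ = C (c ^ 2) * (C (2 * b) * X ^ 2 * coeff i (P * Q)
          + coeff i ((mk fun m => X * d⁄dX ℂ (coeff m P)) * Q)) := by
        simp only [coeff_mul_eq_sum_range, coeff_mk, sum_add_distrib, mul_sum]
    _ = C (c ^ 2) * coeff i ((mk fun m => X * d⁄dX ℂ (coeff m P)) * Q) := by
        rw [hPQ, coeff_one, if_neg hi, mul_zero, zero_add]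

end PowerSeries

/-- Theorem 2 verification: over the complex numbers (so that the substitution
`u ↦ √-1 ⬝ u` makes sense; all data are rational), let
`E = exp (d Υ₀ u²)` and
`V₀ = (1/d) E`, and for `i ≥ 1`
`V_i = u^(2i) E ∑_{η ⊢ i} u^(2ℓ(η)) d^(ℓ(η)-1) Υ^η / Aut(η)`.
Then for every `i ≥ 1`:
`∑_{k=0}^{i} (-1)^(i-k) V_k'(u) ⬝ V_{i-k}(√-1 u) = ((2i+2)/d) Υ_i u^(2i+1)`. -/
theorem V_series_recursion (d : ℚ) (hd : d ≠ 0) (Υ : ℕ → ℚ)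
    (E : PowerSeries ℂ)
    (hE : E = PowerSeries.mk fun n =>
      if n % 2 = 0 then ((d * Υ 0 : ℚ) : ℂ) ^ (n / 2) / (Nat.factorial (n / 2) : ℂ) else 0)
    (V : ℕ → PowerSeries ℂ)
    (hV0 : V 0 = PowerSeries.C (R := ℂ) ((1 / d : ℚ) : ℂ) * E)
    (hVi : ∀ i, 1 ≤ i → V i = PowerSeries.X ^ (2 * i) * E *
      ∑ η : Nat.Partition i,
        PowerSeries.X ^ (2 * Multiset.card η.parts) *
          PowerSeries.C (R := ℂ)
            (((d ^ (Multiset.card η.parts - 1) * (η.parts.map Υ).prod /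
                ∏ p ∈ η.parts.toFinset, (Nat.factorial (η.parts.count p) : ℚ) : ℚ) : ℂ)))
    (i : ℕ) (hi : 1 ≤ i) :
    ∑ k ∈ Finset.range (i + 1),
      ((-1 : ℂ) ^ (i - k)) •
        ((V k).derivativeFun * PowerSeries.rescale Complex.I (V (i - k)))
      = PowerSeries.C (R := ℂ) (((2 * i + 2) / d * Υ i : ℚ) : ℂ) * PowerSeries.X ^ (2 * i + 1) := by
  set a : ℕ → ℂ⟦X⟧ := fun n => C ((d * Υ n : ℚ) : ℂ) * X ^ (2 * n + 2)
  have hd' : (d : ℂ) ≠ 0 := Rat.cast_ne_zero.2 hd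
  have hV (k : ℕ) :
      V k = C (d : ℂ)⁻¹ * (expSq ((d * Υ 0 : ℚ) : ℂ) * coeff k (partitionExp a)) := by
    rcases Nat.eq_zero_or_pos k with rfl | hk
    · rw [hV0, hE, ← expSq_eq_mk, coeff_zero_eq_constantCoeff_apply, constantCoeff_partitionExp,
        mul_one, one_div, Rat.cast_inv]
    · rw [hVi k hk, hE, ← expSq_eq_mk, coeff_partitionExp_C_mul_X_pow d Υ hk,
        mul_left_comm (C _) (expSq _), ← mul_assoc (C _) (C _), ← map_mul, inv_mul_cancel₀ hd',
        map_one, one_mul]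
      ring
  have hconst : ((d : ℂ)⁻¹) ^ 2 * (((2 * i + 2 : ℕ) : ℚ) : ℂ) * ((d * Υ i : ℚ) : ℂ)
      = (((2 * i + 2) / d * Υ i : ℚ) : ℂ) := by
    push_cast
    field_simp
  refine X_mul_cancel ((X_mul_sum_neg_one_pow_smul_derivative_mul_rescale_I hV
    (partitionExp_mul_partitionExp_neg a) (rescale_I_coeff_partitionExp _) (by omega)).trans ?_)
  rw [mk_X_mul_derivative_coeff_partitionExp, mul_assoc, partitionExp_mul_partitionExp_neg, mul_one,
    coeff_mk, if_neg (by omega), rat_smul_eq_C_mul, ← hconst]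
  simp only [map_mul, map_pow]
  ring
end

section
/- Let η = n₁^{m₁}···n_r^{m_r} be a partition with r ≥ 2 distinct part sizes. Then ∑_{η₁ ⊔ η₂ = η, restricted to the first r−1 part-sizes} (-1)^{ℓ(η₂)} (|η₁| + ℓ(η₁)) / (Aut(η₁)·Aut(η₂)) = 0 whenever the truncated partition η̃ = n₁^{m₁}···n_{r−1}^{m_{r−1}} has ℓ(η̃) ≥ 2; if ℓ(η̃) = 1, with η̃ = (n), the sum equals n+1. -/
open Finset

def gq (M k : ℕ) : ℚ := (-1) ^ (M - k) / (k.factorial * (M - k).factorial)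

lemma S_eq (M : ℕ) : ∑ k ∈ range (M+1), gq M k = if M = 0 then 1 else 0 := by
  have key : ∀ k ∈ range (M+1), gq M k =
      ((-1:ℚ)^M / M.factorial) * ((-1)^k * (M.choose k)) := by
    intro k hk
    rw [mem_range] at hk
    have hkM : k ≤ M := by omega
    have hfac : ((M.choose k : ℚ)) * (k.factorial) * ((M-k).factorial) = M.factorial := by
      exact_mod_cast congrArg (Nat.cast (R := ℚ)) (Nat.choose_mul_factorial_mul_factorial hkM)
    have hsign : (-1:ℚ)^M * (-1)^k = (-1)^(M-k) := by
      have h2 : M + k = (M - k) + 2 * k := by omega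
      rw [← pow_add, h2, pow_add, pow_mul]
      norm_num
    have h1 : (Nat.factorial k : ℚ) ≠ 0 := by positivity
    have h2 : (Nat.factorial (M-k) : ℚ) ≠ 0 := by positivity
    have h3 : (Nat.factorial M : ℚ) ≠ 0 := by positivity
    unfold gq
    rw [← hsign]
    field_simp
    linear_combination (-1:ℚ) * hfac
  rw [Finset.sum_congr rfl key, ← Finset.mul_sum]
  have h4 : ∑ k ∈ range (M+1), ((-1:ℚ)^k * (M.choose k)) = if M = 0 then 1 else 0 := by
    have := Int.alternating_sum_range_choose (n := M)
    have := congrArg (fun z : ℤ => (z : ℚ)) this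
    push_cast at this
    exact this
  rw [h4]
  rcases eq_or_ne M 0 with h | h <;> simp [h]

lemma T_eq (M : ℕ) : ∑ k ∈ range (M+1), (k:ℚ) * gq M k = if M = 1 then 1 else 0 := by
  rcases M with _ | M
  · simp [gq]
  · rw [Finset.sum_range_succ']
    simp only [Nat.cast_zero, zero_mul, add_zero]
    have key : ∀ i ∈ range (M+1), ((i+1 : ℕ):ℚ) * gq (M+1) (i+1) = gq M i := by
      intro i hi
      unfold gq
      have h1 : (M+1) - (i+1) = M - i := by omega
      have h2 : ((i+1).factorial : ℚ) = (i+1) * i.factorial := by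
        push_cast [Nat.factorial_succ]; ring
      rw [h1, h2]
      have h3 : (Nat.factorial i : ℚ) ≠ 0 := by positivity
      have h4 : (Nat.factorial (M-i) : ℚ) ≠ 0 := by positivity
      have h5 : ((i:ℚ)+1) ≠ 0 := by positivity
      push_cast
      field_simp
    rw [Finset.sum_congr rfl key, S_eq]
    simp



/-- The inductive-step observation after Lemma 2: let `η` be a partition with at
least two distinct part-sizes, consisting of the truncated partition
`η̃ = n₁^{m₁} ⋯ n_{r-1}^{m_{r-1}}` (encoded here by `n m : Fin r → ℕ` with
`r ≥ 1`, so that `η` has the `r` part-sizes `n j` together with one further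
part-size `nr ∉ range n`, of multiplicity `mr ≥ 1`).  Then the sum
`∑ (-1)^(ℓ(η₂)) (|η₁| + ℓ(η₁)) / (Aut(η₁) ⬝ Aut(η₂))` over splittings restricted
to the first `r` part-sizes (i.e. over splittings of `η̃`) vanishes whenever
`ℓ(η̃) ≥ 2`, and equals `n + 1` if `ℓ(η̃) = 1` with `η̃ = (n)`
(in which case `n = ∑ j, n j * m j`). -/
theorem partition_truncated_splitting_sum (r : ℕ) (hr : 1 ≤ r)
    (n : Fin r → ℕ) (hn : Function.Injective n) (hnpos : ∀ j, 0 < n j)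
    (m : Fin r → ℕ) (hm : ∀ j, 1 ≤ m j)
    (nr mr : ℕ) (hnr : 0 < nr) (hnr' : ∀ j, n j ≠ nr) (hmr : 1 ≤ mr) :
    ∑ k : (j : Fin r) → Fin (m j + 1),
      (-1 : ℚ) ^ (∑ j, (m j - (k j : ℕ))) *
        ((∑ j, n j * (k j : ℕ) : ℕ) + (∑ j, (k j : ℕ) : ℕ)) /
        ((∏ j, (Nat.factorial (k j : ℕ) : ℚ)) *
          (∏ j, (Nat.factorial (m j - (k j : ℕ)) : ℚ)))
      = if (∑ j, m j) = 1 then ((∑ j, n j * m j : ℕ) : ℚ) + 1 else 0 := by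
  classical
  -- the product of gq's equals the sign/factorial factor
  have gprod : ∀ k : (j : Fin r) → Fin (m j + 1),
      (∏ i, gq (m i) (k i : ℕ)) =
      (-1 : ℚ) ^ (∑ j, (m j - (k j : ℕ))) /
        ((∏ j, (Nat.factorial (k j : ℕ) : ℚ)) *
          (∏ j, (Nat.factorial (m j - (k j : ℕ)) : ℚ))) := by
    intro k
    unfold gq
    rw [Finset.prod_div_distrib, Finset.prod_pow_eq_pow_sum, ← Finset.prod_mul_distrib]
  -- rewrite each summand as a sum over j
  have step1 : ∀ k : (j : Fin r) → Fin (m j + 1),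
      (-1 : ℚ) ^ (∑ j, (m j - (k j : ℕ))) *
        ((∑ j, n j * (k j : ℕ) : ℕ) + (∑ j, (k j : ℕ) : ℕ)) /
        ((∏ j, (Nat.factorial (k j : ℕ) : ℚ)) *
          (∏ j, (Nat.factorial (m j - (k j : ℕ)) : ℚ)))
      = ∑ j, ((n j : ℚ) + 1) * ((k j : ℕ) : ℚ) * ∏ i, gq (m i) (k i : ℕ) := by
    intro k
    have hC : ((∑ j, n j * (k j : ℕ) : ℕ) : ℚ) + ((∑ j, (k j : ℕ) : ℕ) : ℚ)
        = ∑ j, ((n j : ℚ) + 1) * ((k j : ℕ) : ℚ) := by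
      push_cast
      rw [← Finset.sum_add_distrib]
      exact Finset.sum_congr rfl fun j _ => by ring
    rw [mul_comm, mul_div_assoc, ← gprod k, hC, Finset.sum_mul]
  rw [Finset.sum_congr rfl fun k _ => step1 k, Finset.sum_comm]
  -- per-j inner sums factor as products
  have step2 : ∀ j : Fin r,
      (∑ k : (j : Fin r) → Fin (m j + 1),
        ((n j : ℚ) + 1) * ((k j : ℕ) : ℚ) * ∏ i, gq (m i) (k i : ℕ))
      = ((n j : ℚ) + 1) *
          ∏ i, ∑ x : Fin (m i + 1),
            (if i = j then ((x : ℕ) : ℚ) else 1) * gq (m i) (x : ℕ) := by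
    intro j
    have e1 : ∀ k : (j : Fin r) → Fin (m j + 1),
        ((n j : ℚ) + 1) * ((k j : ℕ) : ℚ) * ∏ i, gq (m i) (k i : ℕ)
        = ((n j : ℚ) + 1) * ∏ i, (if i = j then ((k i : ℕ) : ℚ) else 1) * gq (m i) (k i : ℕ) := by
      intro k
      rw [Finset.prod_mul_distrib, Finset.prod_ite_eq']
      simp [mul_assoc]
    rw [Finset.sum_congr rfl fun k _ => e1 k, ← Finset.mul_sum, Finset.prod_univ_sum, Fintype.piFinset_univ]
  rw [Finset.sum_congr rfl fun j _ => step2 j]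
  -- evaluate the inner factor sums
  have hT : ∀ i : Fin r, (∑ x : Fin (m i + 1), ((x : ℕ) : ℚ) * gq (m i) (x : ℕ))
      = if m i = 1 then 1 else 0 := by
    intro i
    rw [Fin.sum_univ_eq_sum_range (fun x => (x : ℚ) * gq (m i) x)]
    exact T_eq (m i)
  have hS : ∀ i : Fin r, (∑ x : Fin (m i + 1), gq (m i) (x : ℕ)) = 0 := by
    intro i
    rw [Fin.sum_univ_eq_sum_range (fun x => gq (m i) x), S_eq]
    have := hm i
    simp; omega
  rcases eq_or_lt_of_le hr with h1 | h2
  · -- r = 1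
    obtain rfl : r = 1 := h1.symm
    have hm1 : (∑ j, m j) = m 0 := by simp
    rw [hm1]
    rw [Fin.sum_univ_one]
    rw [show (∏ i : Fin 1, ∑ x : Fin (m i + 1),
        (if i = (0 : Fin 1) then ((x : ℕ) : ℚ) else 1) * gq (m i) (x : ℕ))
      = ∑ x : Fin (m 0 + 1), ((x : ℕ) : ℚ) * gq (m 0) (x : ℕ) by
        rw [Fin.prod_univ_one]; simp]
    rw [hT 0]
    rcases eq_or_ne (m 0) 1 with h | h <;> simp [h]
  · -- r ≥ 2 : every summand vanishes, as does the RHS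
    have hrhs : (∑ j, m j) ≠ 1 := by
      have : (r : ℕ) ≤ ∑ j, m j := by
        calc (r : ℕ) = ∑ _j : Fin r, 1 := by simp
        _ ≤ ∑ j, m j := Finset.sum_le_sum fun j _ => hm j
      omega
    rw [if_neg hrhs]
    refine Finset.sum_eq_zero fun j _ => ?_
    have : ∃ i : Fin r, i ≠ j := by
      by_contra h
      push_neg at h
      have h0 : (⟨0, by omega⟩ : Fin r) = j := h _
      have h1 : (⟨1, by omega⟩ : Fin r) = j := h _
      rw [← h1] at h0
      simp at h0
    obtain ⟨i, hij⟩ := this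
    have hzero : (∑ x : Fin (m i + 1),
        (if i = j then ((x : ℕ) : ℚ) else 1) * gq (m i) (x : ℕ)) = 0 := by
      simp only [if_neg hij, one_mul]
      exact hS i
    rw [Finset.prod_eq_zero (Finset.mem_univ i) hzero, mul_zero]
end

section
/- Fix d ∈ ℚ, d ≠ 0. For each g ≥ 1 let D₁^g ∈ ℚ and define the doubly-indexed sequence D_i^g for i ≥ 0, g ≥ 0 by D₀^0 = 1/d, D₀^g = 0 for g ≥ 1, D_i^0 = 0 for i ≥ 1, and the recursion D_i^g = −d ∑_{g₁+g₂=g} C(2g−1, 2g₁−1) ∑_{k=1}^{i} (−1)^k D_{i−k}^{g₁} D_k^{g₂} for i ≥ 2 (where g₁, g₂ range over nonnegative integers summing to g, and C(2g−1,−1) := 0). Then defining generating functions 𝒟_i(u) = ∑_{g≥i} D_i^g u^{2g}/(2g)!, one has 𝒟_i = (d^{i−1}/i!) 𝒟₁^i for all i ≥ 1. -/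
/-!
Multiplying the recursion by `u ^ (2g-1) / (2g-1)!` and summing over `g` turns it into the
differential equation `𝒟ᵢ' = -d ∑_{k=1}^{i} (-1)^k 𝒟_{i-k}' 𝒟_k`: the binomial
`C(2g-1, 2g₁-1)` is exactly the one in a product of exponential generating functions.
As `𝒟₀` is constant and every `𝒟ᵢ` with `i ≥ 1` vanishes at `0`, strong induction on `i`
reduces the claim to comparing derivatives; after substituting the induction hypothesis
this is the identity `∑_{k=1}^{i-1} (-1)^k C(i-1, k) = -1`.
-/

open PowerSeries Finset Nat

lemma Finset.sum_range_two_mul {M : Type*} [AddCommMonoid M] (f : ℕ → M) (n : ℕ) :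
    ∑ k ∈ range (2 * n), f k = ∑ j ∈ range n, (f (2 * j) + f (2 * j + 1)) := by
  induction n with
  | zero => simp
  | succ n ih =>
    rw [show 2 * (n + 1) = 2 * n + 1 + 1 by ring, sum_range_succ, sum_range_succ, sum_range_succ,
      ih, add_assoc]

lemma Finset.Nat.sum_antidiagonal_two_mul_add_one {M : Type*} [AddCommMonoid M]
    (f : ℕ → ℕ → M) (m : ℕ) :
    ∑ p ∈ antidiagonal (2 * m + 1), f p.1 p.2 =
      ∑ j ∈ range (m + 1), (f (2 * j) (2 * (m - j) + 1) + f (2 * j + 1) (2 * (m - j))) := by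
  rw [Nat.sum_antidiagonal_eq_sum_range_succ f, show (2 * m + 1).succ = 2 * (m + 1) by omega,
    sum_range_two_mul]
  refine sum_congr rfl fun j hj => ?_
  have := mem_range.mp hj
  rw [show 2 * m + 1 - 2 * j = 2 * (m - j) + 1 by omega,
    show 2 * m + 1 - (2 * j + 1) = 2 * (m - j) by omega]

lemma sum_Icc_neg_one_pow_mul_choose {R : Type*} [CommRing R] {n : ℕ} (hn : n ≠ 0) :
    ∑ k ∈ Icc 1 n, (-1 : R) ^ k * n.choose k = -1 := by
  have h := congrArg (Int.cast : ℤ → R) (Int.alternating_sum_range_choose_of_ne hn)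
  push_cast at h
  rw [range_eq_Ico, sum_eq_sum_Ico_succ_bot (by omega)] at h
  simp only [pow_zero, choose_zero_right, cast_one, one_mul] at h
  rw [← Ico_add_one_right_eq_Icc]
  linear_combination h

lemma neg_mul_sum_Icc_pow_div_factorial_mul {K : Type*} [Field K] [CharZero K] (d : K) {n : ℕ}
    (hn : n ≠ 0) :
    -d * ∑ k ∈ Icc 1 n, (-1) ^ k * (d ^ (n - k) / (n - k)! * (d ^ (k - 1) / k !)) =
      d ^ n / n ! := by
  have hterm : ∀ k ∈ Icc 1 n, (-1) ^ k * (d ^ (n - k) / (n - k)! * (d ^ (k - 1) / k !)) =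
      d ^ (n - 1) / n ! * ((-1) ^ k * n.choose k) := by
    intro k hk
    obtain ⟨hk1, hkn⟩ := mem_Icc.mp hk
    rw [cast_choose K hkn, show n - 1 = (n - k) + (k - 1) by omega, pow_add]
    have : (n ! : K) ≠ 0 := by exact_mod_cast n.factorial_ne_zero
    field_simp
  rw [sum_congr rfl hterm, ← mul_sum, sum_Icc_neg_one_pow_mul_choose hn, ← pow_sub_one_mul hn]
  ring

namespace PowerSeries

variable {K : Type*} [Field K]

noncomputable def egf (c : ℕ → K) : K⟦X⟧ := mk fun n => c n / n !

@[simp] lemma coeff_egf (c : ℕ → K) (n : ℕ) : coeff n (egf c) = c n / n ! := coeff_mk _ _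

noncomputable def evenEGF (a : ℕ → K) : K⟦X⟧ :=
  egf fun n => if n % 2 = 0 then a (n / 2) else 0

lemma mk_eq_evenEGF (a : ℕ → K) :
    (mk fun n => if n % 2 = 0 then a (n / 2) / n ! else 0) = evenEGF a := by
  simp only [evenEGF, egf, ite_div, zero_div]

lemma constantCoeff_evenEGF (a : ℕ → K) : constantCoeff (evenEGF a) = a 0 := by
  simp [← coeff_zero_eq_constantCoeff_apply, evenEGF]

variable [CharZero K]

lemma derivative_egf (c : ℕ → K) : d⁄dX K (egf c) = egf fun n => c (n + 1) := by
  ext n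
  rw [coeff_derivative, coeff_egf, coeff_egf, factorial_succ]
  push_cast
  field_simp

lemma egf_mul (c c' : ℕ → K) :
    egf c * egf c' = egf fun n => ∑ p ∈ antidiagonal n, (n.choose p.1 : K) * c p.1 * c' p.2 := by
  ext n
  rw [coeff_mul, coeff_egf, sum_div]
  refine sum_congr rfl fun p hp => ?_
  obtain rfl := mem_antidiagonal.mp hp
  rw [coeff_egf, coeff_egf, cast_add_choose]
  field_simp
  exact (mul_div_mul_right _ _ (by exact_mod_cast (p.1 + p.2).factorial_ne_zero)).symm

lemma derivative_smul_pow_succ (a : K) (F : K⟦X⟧) (m : ℕ) :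
    d⁄dX K ((a / (m + 1)!) • F ^ (m + 1)) = (a / m !) • (F ^ m * d⁄dX K F) := by
  rw [(d⁄dX K).map_smul, derivative_pow, add_tsub_cancel_right, mul_assoc,
    ← map_natCast (C (R := K)), ← smul_eq_C_mul, smul_smul, factorial_succ]
  congr 1
  push_cast
  field_simp

theorem eq_smul_pow_of_derivative_recursion (d : K) (E : ℕ → K⟦X⟧)
    (hE₀ : d⁄dX K (E 0) = 0) (hconst : ∀ i, 1 ≤ i → constantCoeff (E i) = 0)
    (hrec : ∀ i, 2 ≤ i →
      d⁄dX K (E i) = -d • ∑ k ∈ Icc 1 i, (-1 : K) ^ k • (d⁄dX K (E (i - k)) * E k))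
    (i : ℕ) (hi : 1 ≤ i) : E i = (d ^ (i - 1) / i !) • E 1 ^ i := by
  induction i using Nat.strong_induction_on with
  | _ i ih =>
  obtain ⟨n, rfl⟩ := exists_eq_add_one_of_ne_zero (one_le_iff_ne_zero.mp hi)
  rcases eq_or_ne n 0 with rfl | hn
  · simp
  set F := E 1
  have hderiv : ∀ m, m < n → d⁄dX K (E (m + 1)) = (d ^ m / m !) • (F ^ m * d⁄dX K F) := by
    intro m hm
    rw [ih (m + 1) (by omega) (by omega), add_tsub_cancel_right, derivative_smul_pow_succ]
  have hprod : ∀ k ∈ Icc 1 n, d⁄dX K (E (n + 1 - k)) * E k =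
      (d ^ (n - k) / (n - k)! * (d ^ (k - 1) / k !)) • (F ^ n * d⁄dX K F) := by
    intro k hk
    obtain ⟨hk1, hkn⟩ := mem_Icc.mp hk
    rw [show n + 1 - k = n - k + 1 by omega, hderiv _ (by omega), ih k (by omega) hk1,
      smul_mul_smul_comm, mul_right_comm, ← pow_add, show n - k + k = n by omega]
  refine derivative.ext ?_ ?_
  · rw [hrec _ (by omega), sum_Icc_succ_top (by omega), tsub_self, hE₀, zero_mul, smul_zero,
      add_zero, sum_congr rfl fun k hk => by rw [hprod k hk, smul_smul], ← sum_smul, smul_smul,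
      neg_mul_sum_Icc_pow_div_factorial_mul d hn, add_tsub_cancel_right, derivative_smul_pow_succ]
  · rw [hconst _ (by omega), smul_eq_C_mul, map_mul, map_pow, hconst 1 le_rfl,
      zero_pow (succ_ne_zero n), mul_zero]

lemma derivative_evenEGF_mul_evenEGF (a b : ℕ → K) :
    d⁄dX K (evenEGF a) * evenEGF b = egf fun n => ∑ p ∈ antidiagonal n, (n.choose p.1 : K) *
      (if (p.1 + 1) % 2 = 0 then a ((p.1 + 1) / 2) else 0) *
        (if p.2 % 2 = 0 then b (p.2 / 2) else 0) := by
  rw [evenEGF, evenEGF, derivative_egf, egf_mul]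

lemma coeff_two_mul_derivative_evenEGF_mul (a b : ℕ → K) (m : ℕ) :
    coeff (2 * m) (d⁄dX K (evenEGF a) * evenEGF b) = 0 := by
  rw [derivative_evenEGF_mul_evenEGF, coeff_egf, div_eq_zero_iff]
  refine Or.inl (sum_eq_zero fun p hp => ?_)
  have := mem_antidiagonal.mp hp
  split_ifs <;> first | omega | simp

lemma coeff_two_mul_add_one_derivative_evenEGF_mul (a b : ℕ → K) (m : ℕ) :
    coeff (2 * m + 1) (d⁄dX K (evenEGF a) * evenEGF b) =
      (∑ j ∈ range (m + 1), ((2 * m + 1).choose (2 * j + 1) : K) * a (j + 1) * b (m - j)) /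
        (2 * m + 1)! := by
  rw [derivative_evenEGF_mul_evenEGF, coeff_egf,
    Finset.Nat.sum_antidiagonal_two_mul_add_one (fun i j => ((2 * m + 1).choose i : K) *
      (if (i + 1) % 2 = 0 then a ((i + 1) / 2) else 0) * (if j % 2 = 0 then b (j / 2) else 0))]
  congr 1
  refine sum_congr rfl fun j _ => ?_
  simp [Nat.add_mod, show (2 * j + 1 + 1) / 2 = j + 1 by omega]

lemma coeff_derivative_evenEGF_two_mul (a : ℕ → K) (m : ℕ) :
    coeff (2 * m) (d⁄dX K (evenEGF a)) = 0 := by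
  simp [evenEGF, derivative_egf, Nat.add_mod]

lemma coeff_derivative_evenEGF_two_mul_add_one (a : ℕ → K) (m : ℕ) :
    coeff (2 * m + 1) (d⁄dX K (evenEGF a)) = a (m + 1) / (2 * m + 1)! := by
  simp [evenEGF, derivative_egf, Nat.add_mod, show (2 * m + 1 + 1) / 2 = m + 1 by omega]

lemma derivative_evenEGF_of_recursion (d : K) (D : ℕ → ℕ → K)
    (hrec : ∀ i g, 2 ≤ i → 1 ≤ g →
      D i g = -d * ∑ g₁ ∈ range (g + 1),
        (if g₁ = 0 then 0 else ((2 * g - 1).choose (2 * g₁ - 1) : K)) *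
          ∑ k ∈ Icc 1 i, (-1 : K) ^ k * D (i - k) g₁ * D k (g - g₁))
    (i : ℕ) (hi : 2 ≤ i) :
    d⁄dX K (evenEGF (D i)) =
      -d • ∑ k ∈ Icc 1 i, (-1 : K) ^ k • (d⁄dX K (evenEGF (D (i - k))) * evenEGF (D k)) := by
  ext n
  simp only [coeff_smul, map_sum, smul_eq_mul]
  obtain ⟨m, rfl | rfl⟩ := Nat.even_or_odd' n
  · simp [coeff_derivative_evenEGF_two_mul, coeff_two_mul_derivative_evenEGF_mul]
  rw [coeff_derivative_evenEGF_two_mul_add_one, hrec i (m + 1) hi (by omega), sum_range_succ']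
  simp only [coeff_two_mul_add_one_derivative_evenEGF_mul, if_pos, if_neg (succ_ne_zero _),
    show 2 * (m + 1) - 1 = 2 * m + 1 by omega, show ∀ j, 2 * (j + 1) - 1 = 2 * j + 1 by omega,
    Nat.add_sub_add_right, zero_mul, sum_const_zero, add_zero, mul_sum, sum_div]
  rw [sum_comm]
  refine sum_congr rfl fun k _ => sum_congr rfl fun j _ => ?_
  ring

end PowerSeries

theorem D_double_recursion_solution_general
    (d : ℚ) (D : ℕ → ℕ → ℚ)
    (h0g : ∀ g, 1 ≤ g → D 0 g = 0)
    (hi0 : ∀ i, 1 ≤ i → D i 0 = 0)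
    (hrec : ∀ i g, 2 ≤ i → 1 ≤ g →
      D i g = -d * ∑ g₁ ∈ Finset.range (g + 1),
        (if g₁ = 0 then 0 else ((2 * g - 1).choose (2 * g₁ - 1) : ℚ)) *
          ∑ k ∈ Finset.Icc 1 i, (-1 : ℚ) ^ k * D (i - k) g₁ * D k (g - g₁))
    (i : ℕ) (hi : 1 ≤ i) :
    (PowerSeries.mk fun n =>
        if n % 2 = 0 then D i (n / 2) / (Nat.factorial n : ℚ) else 0)
      = (d ^ (i - 1) / (Nat.factorial i : ℚ)) •
        (PowerSeries.mk fun n =>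
          if n % 2 = 0 then D 1 (n / 2) / (Nat.factorial n : ℚ) else 0) ^ i := by
  have hD₀ : d⁄dX ℚ (evenEGF (D 0)) = 0 := by
    ext n
    obtain ⟨m, rfl | rfl⟩ := Nat.even_or_odd' n
    · rw [coeff_derivative_evenEGF_two_mul, map_zero]
    · rw [coeff_derivative_evenEGF_two_mul_add_one, h0g _ (by omega), zero_div, map_zero]
  rw [mk_eq_evenEGF, mk_eq_evenEGF]
  exact eq_smul_pow_of_derivative_recursion d (fun i => evenEGF (D i)) hD₀
    (fun i hi => by rw [constantCoeff_evenEGF, hi0 i hi])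
    (derivative_evenEGF_of_recursion d D hrec) i hi

/-- Theorem 1 combined with the localization recursion: given arbitrary data
`D 1 g` (`g ≥ 1`) and the doubly-indexed sequence `D i g` determined by
`D 0 0 = 1/d`, `D 0 g = 0` for `g ≥ 1`, `D i 0 = 0` for `i ≥ 1`, and
`D i g = -d ∑_{g₁+g₂=g} C(2g-1, 2g₁-1) ∑_{k=1}^{i} (-1)^k D_{i-k}^{g₁} D_k^{g₂}`
for `i ≥ 2` (with the convention `C(2g-1, -1) = 0` for `g₁ = 0`), the generating
functions `𝒟_i(u) = ∑_g D_i^g u^(2g)/(2g)!` satisfy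
`𝒟_i = (d^(i-1)/i!) 𝒟₁^i` for all `i ≥ 1`. -/
theorem D_double_recursion_solution (d : ℚ) (hd : d ≠ 0)
    (D : ℕ → ℕ → ℚ)
    (h00 : D 0 0 = 1 / d)
    (h0g : ∀ g, 1 ≤ g → D 0 g = 0)
    (hi0 : ∀ i, 1 ≤ i → D i 0 = 0)
    (hrec : ∀ i g, 2 ≤ i → 1 ≤ g →
      D i g = -d * ∑ g₁ ∈ Finset.range (g + 1),
        (if g₁ = 0 then 0 else ((2 * g - 1).choose (2 * g₁ - 1) : ℚ)) *
          ∑ k ∈ Finset.Icc 1 i, (-1 : ℚ) ^ k * D (i - k) g₁ * D k (g - g₁))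
    (i : ℕ) (hi : 1 ≤ i) :
    (PowerSeries.mk fun n =>
        if n % 2 = 0 then D i (n / 2) / (Nat.factorial n : ℚ) else 0)
      = (d ^ (i - 1) / (Nat.factorial i : ℚ)) •
        (PowerSeries.mk fun n =>
          if n % 2 = 0 then D 1 (n / 2) / (Nat.factorial n : ℚ) else 0) ^ i :=
  D_double_recursion_solution_general d D h0g hi0 hrec i hi
end
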